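/- Let π = π₁π₂⋯π_{2n+1} be a minimal permutation of length 2n+1 with n+1 descents whose unique pair of consecutive descents is (2i−1, 2i), for some 1 ≤ i ≤ n. Then π is Knuth equivalent to the permutation π' = π₁π₂⋯π_{2i−1}π_{2i} π_{2i+2}π_{2i+4}⋯π_{2n} π_{2i+1}π_{2i+3}⋯π_{2n+1}, obtained from π by fixing the first 2i entries and then listing the remaining entries with even subscripts followed by those with odd subscripts. -/

import Mathlib

/-- `i` (1-based) is a descent of the word `w`, i.e. `1 ≤ i ≤ w.length - 1` and
`w_i > w_{i+1}` (1-based entries). -/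
def DescentAt (w : List ℕ) (i : ℕ) : Prop :=
  1 ≤ i ∧ i + 1 ≤ w.length ∧ w.getD i 0 < w.getD (i - 1) 0

instance (w : List ℕ) (i : ℕ) : Decidable (DescentAt w i) :=
  inferInstanceAs (Decidable (_ ∧ _ ∧ _))

/-- `i` (1-based) is an ascent of the word `w`. -/
def AscentAt (w : List ℕ) (i : ℕ) : Prop :=
  1 ≤ i ∧ i + 1 ≤ w.length ∧ w.getD (i - 1) 0 < w.getD i 0

instance (w : List ℕ) (i : ℕ) : Decidable (AscentAt w i) :=
  inferInstanceAs (Decidable (_ ∧ _ ∧ _))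

/-- The set of descent positions of `w`. -/
def descents (w : List ℕ) : Finset ℕ :=
  (Finset.range w.length).filter (fun i => DescentAt w i)

/-- `w` is a permutation of `[n] = {1,…,n}`, written as a word. -/
def IsPermWord (n : ℕ) (w : List ℕ) : Prop :=
  w.length = n ∧ w.Nodup ∧ ∀ x ∈ w, 1 ≤ x ∧ x ≤ n

/-- Two words of distinct entries are in the same relative order. -/
def SameRelOrder (u v : List ℕ) : Prop :=
  u.length = v.length ∧
    ∀ p q, p < u.length → q < u.length →
      (u.getD p 0 < u.getD q 0 ↔ v.getD p 0 < v.getD q 0)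

/-- `σ ≺ w`: the word `w` contains the pattern `σ`, i.e. `w` has a subsequence
in the same relative order as `σ`. -/
def ContainsPattern (σ w : List ℕ) : Prop :=
  ∃ s : List ℕ, s.Sublist w ∧ SameRelOrder s σ

/-- `w` is a minimal permutation with `d` descents: it has exactly `d` descents and
no strictly shorter permutation with exactly `d` descents occurs in it as a pattern. -/
def MinimalPerm (d : ℕ) (w : List ℕ) : Prop :=
  (descents w).card = d ∧
    ∀ (m : ℕ) (σ : List ℕ), IsPermWord m σ → m < w.length →
      (descents σ).card = d → ¬ ContainsPattern σ w

/-- `w` is a minimal permutation (with its own number of descents). -/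
def IsMinimal (w : List ℕ) : Prop :=
  MinimalPerm (descents w).card w

/-- The set `𝓕_d(n)` of minimal permutations of length `n` with `d` descents. -/
def minimalPerms (d n : ℕ) : Set (List ℕ) :=
  {w | IsPermWord n w ∧ MinimalPerm d w}

/-- `f_d(n) = |𝓕_d(n)|`. -/
noncomputable def fCount (d n : ℕ) : ℕ :=
  (minimalPerms d n).ncard

/-- `w` has ascent sequence `a`: `w` decomposes into maximal strictly decreasing
runs whose lengths, from left to right, are the entries of `a` (maximality is
expressed by the junctions between consecutive runs being ascents). -/
def HasAscentSeq (w a : List ℕ) : Prop :=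
  ∃ bs : List (List ℕ), bs.flatten = w ∧ bs.map List.length = a ∧
    (∀ b ∈ bs, b ≠ [] ∧ List.Chain' (fun x y => x > y) b) ∧
    List.Chain' (fun b c => ∃ x ∈ b.getLast?, ∃ y ∈ c.head?, x < y) bs

/-- The set `𝓕_{a₁,…,a_k}(n)` of minimal permutations of length `n` with
ascent sequence `a = (a₁,…,a_k)`. -/
def minimalPermsAsc (n : ℕ) (a : List ℕ) : Set (List ℕ) :=
  {w | IsPermWord n w ∧ IsMinimal w ∧ HasAscentSeq w a}

/-- `F_{a₁,…,a_k}(n) = |𝓕_{a₁,…,a_k}(n)|`. -/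
noncomputable def FCount (n : ℕ) (a : List ℕ) : ℕ :=
  (minimalPermsAsc n a).ncard

/-- A standard filling of a given cell set by `1,…,N`: zero off the cells,
a bijection from the cells onto `{1,…,N}`, strictly increasing along rows
(second coordinate) and columns (first coordinate). -/
def IsTableauOn (cell : ℕ → ℕ → Prop) (N : ℕ) (T : ℕ → ℕ → ℕ) : Prop :=
  (∀ r c, ¬ cell r c → T r c = 0) ∧
  (∀ r c, cell r c → 1 ≤ T r c ∧ T r c ≤ N) ∧
  (∀ r c r' c', cell r c → cell r' c' → T r c = T r' c' → r = r' ∧ c = c') ∧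
  (∀ v, 1 ≤ v → v ≤ N → ∃ r c, cell r c ∧ T r c = v) ∧
  (∀ r c, cell r c → cell r (c + 1) → T r c < T r (c + 1)) ∧
  (∀ r c, cell r c → cell (r + 1) c → T r c < T (r + 1) c)

/-- The cells of the skew shape `λ/μ` (rows indexed from `0` downward,
columns from `0` rightward): row `r` contains columns `μ_r ≤ c < λ_r`. -/
def skewCell (l m : List ℕ) (r c : ℕ) : Prop :=
  r < l.length ∧ m.getD r 0 ≤ c ∧ c < l.getD r 0

/-- A standard skew Young tableau of shape `λ/μ`. -/
def IsSkewSYT (l m : List ℕ) (T : ℕ → ℕ → ℕ) : Prop :=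
  IsTableauOn (skewCell l m) (l.sum - m.sum) T

/-- `f^{λ/μ}`, the number of standard skew Young tableaux of shape `λ/μ`. -/
noncomputable def skewSYTCount (l m : List ℕ) : ℕ :=
  Nat.card {T : ℕ → ℕ → ℕ // IsSkewSYT l m T}

/-- The row index of the top cell of column `c` in the 2-regular skew shape
with column lengths `a₁,…,a_k` (columns normalized so that the last column
starts in row `0`; consecutive columns overlap in exactly two rows). -/
def colTop (a : List ℕ) (c : ℕ) : ℕ :=
  (a.drop (c + 1)).sum - 2 * (a.length - 1 - c)

/-- The cells of the 2-regular skew shape with column lengths `a₁,…,a_k`: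
column `c` occupies the `a_c` rows starting at `colTop a c`, so that any two
consecutive columns overlap in exactly two rows. -/
def twoRegCell (a : List ℕ) (r c : ℕ) : Prop :=
  c < a.length ∧ colTop a c ≤ r ∧ r < colTop a c + a.getD c 0

/-- A 2-regular skew tableau with column lengths `a₁,…,a_k`: a standard filling
of the 2-regular skew shape by `1,…,a₁+⋯+a_k`. -/
def Is2RegularTableau (a : List ℕ) (T : ℕ → ℕ → ℕ) : Prop :=
  IsTableauOn (twoRegCell a) a.sum T

/-- `𝓜_{2n+1,2i}`: minimal permutations of length `2n+1` with `n+1` descents whose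
unique pair of consecutive descents is `(2i-1, 2i)`. -/
def Mset (n i : ℕ) : Set (List ℕ) :=
  {w | IsPermWord (2 * n + 1) w ∧ MinimalPerm (n + 1) w ∧
    DescentAt w (2 * i - 1) ∧ DescentAt w (2 * i) ∧
    ∀ j, DescentAt w j → DescentAt w (j + 1) → j = 2 * i - 1}

/-- Elementary Knuth transformations on words of distinct integers. -/
inductive KnuthStep : List ℕ → List ℕ → Prop
  | k1 (u v : List ℕ) (x y z : ℕ) (hxy : x < y) (hyz : y < z) :
      KnuthStep (u ++ [x, z, y] ++ v) (u ++ [z, x, y] ++ v)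
  | k2 (u v : List ℕ) (x y z : ℕ) (hxy : x < y) (hyz : y < z) :
      KnuthStep (u ++ [y, x, z] ++ v) (u ++ [y, z, x] ++ v)

/-- Knuth equivalence of words. -/
def KnuthEquiv : List ℕ → List ℕ → Prop := Relation.EqvGen KnuthStep

/-!
Removing the descent `2i` from the descent set of `π` leaves `n` pairwise non-adjacent positions
in `[1, 2n]`, hence exactly one in each pair `{2k - 1, 2k}`. Starting from `2i`, a descent at `2k`
excludes one at `2k + 1` and so forces one at `2k + 2`: from position `2i` on, `π` is a zigzag
with peaks at the even subscripts. Minimality makes its valleys increase, since deleting a peak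
above a decreasing pair of valleys keeps the number of descents. Finally a zigzag with increasing
valleys is Knuth equivalent to its peaks followed by its valleys: each new peak is carried to the
left across the increasing run of valleys by moves `xzy → zxy`.
-/

namespace KnuthStep

theorem append_left {a b : List ℕ} (u : List ℕ) (h : KnuthStep a b) :
    KnuthStep (u ++ a) (u ++ b) := by
  cases h with
  | k1 u' v x y z hxy hyz =>
    simpa only [List.append_assoc] using k1 (u ++ u') v x y z hxy hyz
  | k2 u' v x y z hxy hyz =>
    simpa only [List.append_assoc] using k2 (u ++ u') v x y z hxy hyz

theorem append_right {a b : List ℕ} (v : List ℕ) (h : KnuthStep a b) :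
    KnuthStep (a ++ v) (b ++ v) := by
  cases h with
  | k1 u v' x y z hxy hyz =>
    simpa only [List.append_assoc] using k1 u (v' ++ v) x y z hxy hyz
  | k2 u v' x y z hxy hyz =>
    simpa only [List.append_assoc] using k2 u (v' ++ v) x y z hxy hyz

end KnuthStep

namespace KnuthEquiv

theorem refl (a : List ℕ) : KnuthEquiv a a := Relation.EqvGen.refl a

theorem trans {a b c : List ℕ} (hab : KnuthEquiv a b) (hbc : KnuthEquiv b c) :
    KnuthEquiv a c :=
  Relation.EqvGen.trans a b c hab hbc

theorem of_step {a b : List ℕ} (h : KnuthStep a b) : KnuthEquiv a b := Relation.EqvGen.rel a b h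

theorem map {f : List ℕ → List ℕ} (hf : ∀ a b, KnuthStep a b → KnuthStep (f a) (f b))
    {a b : List ℕ} (h : KnuthEquiv a b) : KnuthEquiv (f a) (f b) := by
  induction h with
  | rel a b h => exact of_step (hf a b h)
  | refl a => exact refl (f a)
  | symm a b _ ih => exact Relation.EqvGen.symm _ _ ih
  | trans a b c _ _ ihab ihbc => exact ihab.trans ihbc

theorem append_left {a b : List ℕ} (u : List ℕ) (h : KnuthEquiv a b) :
    KnuthEquiv (u ++ a) (u ++ b) :=
  map (fun _ _ => KnuthStep.append_left u) h

theorem append_right {a b : List ℕ} (v : List ℕ) (h : KnuthEquiv a b) :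
    KnuthEquiv (a ++ v) (b ++ v) :=
  map (fun _ _ => KnuthStep.append_right v) h

end KnuthEquiv

theorem knuthEquiv_append_pair (E : List ℕ) {y z : ℕ} (hE : (E ++ [y]).IsChain (· < ·))
    (hyz : y < z) : KnuthEquiv (E ++ [z, y]) (z :: (E ++ [y])) := by
  induction E using List.reverseRecOn generalizing y with
  | nil => exact KnuthEquiv.refl _
  | append_singleton E e ih =>
    obtain ⟨hEe, -, hey⟩ := List.isChain_append.1 hE
    have hey : e < y := hey e (by simp) y (by simp)
    have hstep : KnuthEquiv (E ++ [e, z, y]) (E ++ [z, e] ++ [y]) := by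
      simpa using KnuthEquiv.of_step (KnuthStep.k1 E [] e y z hey hyz)
    simpa using hstep.trans ((ih hEe (hey.trans hyz)).append_right [y])

def oddPart (c : ℕ → ℕ) (m : ℕ) : List ℕ := (List.range m).map fun t => c (2 * t + 1)

def evenPart (c : ℕ → ℕ) (m : ℕ) : List ℕ := (List.range (m + 1)).map fun t => c (2 * t)

theorem oddPart_succ (c : ℕ → ℕ) (m : ℕ) :
    oddPart c (m + 1) = oddPart c m ++ [c (2 * m + 1)] := by
  simp [oddPart, List.range_succ]

theorem evenPart_succ (c : ℕ → ℕ) (m : ℕ) :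
    evenPart c (m + 1) = evenPart c m ++ [c (2 * m + 2)] := by
  simp [evenPart, List.range_succ (n := m + 1), Nat.mul_succ]

theorem evenPart_isChain {c : ℕ → ℕ} {m : ℕ} (hc : ∀ t < m, c (2 * t) < c (2 * t + 2)) :
    (evenPart c m).IsChain (· < ·) := by
  rw [evenPart, List.isChain_map, List.isChain_range_succ]
  exact hc

theorem knuthEquiv_zigzag (c : ℕ → ℕ) (m : ℕ)
    (hc : ∀ t < m, c (2 * t) < c (2 * t + 2) ∧ c (2 * t + 2) < c (2 * t + 1)) :
    KnuthEquiv ((List.range (2 * m + 1)).map c) (oddPart c m ++ evenPart c m) := by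
  induction m with
  | zero => exact KnuthEquiv.refl _
  | succ m ih =>
    have hinit := (ih fun t ht => hc t (by omega)).append_right [c (2 * m + 1), c (2 * m + 2)]
    have hchain : (evenPart c m ++ [c (2 * m + 2)]).IsChain (· < ·) := by
      rw [← evenPart_succ]
      exact evenPart_isChain fun t ht => (hc t ht).1
    have hbubble := (knuthEquiv_append_pair _ hchain (hc m (by omega)).2).append_left (oddPart c m)
    rw [oddPart_succ, evenPart_succ]
    have hsplit :
        List.range (2 * (m + 1) + 1) = List.range (2 * m + 1) ++ [2 * m + 1, 2 * m + 2] := by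
      simp [show 2 * (m + 1) + 1 = 2 * m + 1 + 1 + 1 by ring, List.range_succ]
    rw [hsplit, List.map_append]
    simpa using hinit.trans (by simpa only [List.append_assoc] using hbubble)

namespace List

theorem Nodup.getD_ne {α : Type*} {l : List α} (hl : l.Nodup) {d : α} {p q : ℕ}
    (hp : p < l.length) (hq : q < l.length) (hpq : p ≠ q) : l.getD p d ≠ l.getD q d := by
  rw [getD_eq_getElem _ _ hp, getD_eq_getElem _ _ hq]
  exact fun heq => hpq (hl.getElem_inj_iff.1 heq)

theorem getD_eraseIdx {α : Type*} (l : List α) (p j : ℕ) (d : α) :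
    (l.eraseIdx p).getD j d = l.getD (if j < p then j else j + 1) d := by
  simp only [getD_eq_getElem?_getD, getElem?_eraseIdx]
  split_ifs <;> rfl

end List

theorem mem_descents {w : List ℕ} {j : ℕ} : j ∈ descents w ↔ DescentAt w j := by
  simp only [descents, Finset.mem_filter, Finset.mem_range, and_iff_right_iff_imp]
  exact fun h => by have := h.2.1; omega

theorem descents_subset_Icc (w : List ℕ) : descents w ⊆ Finset.Icc 1 (w.length - 1) := by
  intro j hj
  have := mem_descents.1 hj
  simp only [Finset.mem_Icc]
  exact ⟨this.1, by have := this.2.1; omega⟩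

theorem DescentAt.getD_lt {w : List ℕ} {j : ℕ} (h : DescentAt w (j + 1)) :
    w.getD (j + 1) 0 < w.getD j 0 :=
  h.2.2

theorem getD_lt_of_not_descentAt {w : List ℕ} (hw : w.Nodup) {j : ℕ} (hj : j + 2 ≤ w.length)
    (h : ¬ DescentAt w (j + 1)) : w.getD j 0 < w.getD (j + 1) 0 :=
  lt_of_le_of_ne (not_lt.1 fun hlt => h ⟨by omega, hj, hlt⟩) (hw.getD_ne (by omega) hj (by omega))

theorem descents_eq_of_sameRelOrder {u v : List ℕ} (h : SameRelOrder u v) :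
    descents u = descents v := by
  ext j
  simp only [mem_descents, DescentAt, ← h.1]
  exact and_congr_right fun _ => and_congr_right fun hj => h.2 j (j - 1) (by omega) (by omega)

namespace List

def rank (s : List ℕ) (x : ℕ) : ℕ := (s.toFinset.filter (· ≤ x)).card

def standardize (s : List ℕ) : List ℕ := s.map s.rank

theorem rank_mono (s : List ℕ) : Monotone s.rank := fun _ _ hxy =>
  Finset.card_le_card (Finset.monotone_filter_right _ fun _ _ hz => hz.trans hxy)

theorem rank_lt_rank {s : List ℕ} {x y : ℕ} (hxy : x < y) (hy : y ∈ s) : s.rank x < s.rank y :=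
  Finset.card_lt_card <| Finset.ssubset_iff_of_subset
    (Finset.monotone_filter_right _ fun _ _ hz => hz.trans hxy.le) |>.2
    ⟨y, by simp [hy], by simp [hxy]⟩

theorem rank_lt_rank_iff {s : List ℕ} {x y : ℕ} (hy : y ∈ s) : s.rank x < s.rank y ↔ x < y :=
  ⟨fun h => not_le.1 fun hyx => h.not_ge (s.rank_mono hyx), fun h => rank_lt_rank h hy⟩

theorem sameRelOrder_standardize (s : List ℕ) : SameRelOrder s s.standardize := by
  refine ⟨by simp [standardize], fun p q hp hq => ?_⟩
  have hp' : p < s.standardize.length := by simpa [standardize] using hp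
  have hq' : q < s.standardize.length := by simpa [standardize] using hq
  rw [getD_eq_getElem _ _ hp, getD_eq_getElem _ _ hq, getD_eq_getElem _ _ hp',
    getD_eq_getElem _ _ hq']
  simp only [standardize, getElem_map]
  exact (rank_lt_rank_iff (getElem_mem hq)).symm

theorem Nodup.isPermWord_standardize {s : List ℕ} (hs : s.Nodup) :
    IsPermWord s.length s.standardize := by
  refine ⟨by simp [standardize], hs.map_on fun x hx y hy hxy => ?_, fun r hr => ?_⟩
  · rcases lt_trichotomy x y with h | h | h
    · exact absurd hxy (rank_lt_rank h hy).ne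
    · exact h
    · exact absurd hxy (rank_lt_rank h hx).ne'
  · obtain ⟨x, hx, rfl⟩ := mem_map.1 hr
    exact ⟨Finset.card_pos.2 ⟨x, by simp [hx]⟩,
      (Finset.card_filter_le _ _).trans (toFinset_card_le s)⟩

end List

theorem MinimalPerm.card_descents_ne_of_sublist {d : ℕ} {w s : List ℕ} (hmin : MinimalPerm d w)
    (hw : w.Nodup) (hs : s.Sublist w) (hlen : s.length < w.length) : (descents s).card ≠ d := by
  intro hcard
  have hrel := s.sameRelOrder_standardize
  exact hmin.2 s.length s.standardize (hs.nodup hw).isPermWord_standardize hlen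
    (descents_eq_of_sameRelOrder hrel ▸ hcard) ⟨s, hs, hrel⟩

/-- Deleting the peak `w (r + 1)` merges the ascent at `r + 1` and the descent at `r + 2` into
the single descent `w r > w (r + 2)`. -/
theorem descentAt_eraseIdx_iff {w : List ℕ} {r : ℕ} (hr : r + 2 < w.length)
    (hasc : w.getD r 0 < w.getD (r + 1) 0) (hjump : w.getD (r + 2) 0 < w.getD r 0) (j : ℕ) :
    DescentAt (w.eraseIdx (r + 1)) j ↔ DescentAt w (if j ≤ r then j else j + 1) := by
  have hlen : (w.eraseIdx (r + 1)).length = w.length - 1 := by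
    simp [List.length_eraseIdx, show r + 1 < w.length by omega]
  simp only [DescentAt, List.getD_eraseIdx, hlen]
  split_ifs <;> first | omega | skip
  · obtain rfl : j = r + 1 := by omega
    simp only [Nat.add_one_sub_one, show r + 1 + 1 = r + 2 from rfl]
    omega
  · rw [show j - 1 + 1 = j + 1 - 1 by omega]
    omega

theorem card_descents_eraseIdx_of_peak {w : List ℕ} {r : ℕ} (hr : r + 2 < w.length)
    (hasc : w.getD r 0 < w.getD (r + 1) 0) (hjump : w.getD (r + 2) 0 < w.getD r 0) :
    (descents (w.eraseIdx (r + 1))).card = (descents w).card := by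
  have hiff := descentAt_eraseIdx_iff hr hasc hjump
  have hpeak : r + 1 ∉ descents w := fun h => (mem_descents.1 h).2.2.not_gt hasc
  refine Finset.card_nbij' (fun j => if j ≤ r then j else j + 1)
    (fun d => if d ≤ r then d else d - 1) (fun j hj => ?_) (fun d hd => ?_)
    (fun j _ => by dsimp only; split_ifs <;> omega) (fun d hd => ?_)
  · exact mem_descents.2 ((hiff j).1 (mem_descents.1 hj))
  · have hd' : d ≠ r + 1 := by rintro rfl; exact hpeak hd
    refine mem_descents.2 ((hiff _).2 ?_)
    dsimp only
    convert mem_descents.1 hd using 2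
    split_ifs <;> omega
  · have hd' : d ≠ r + 1 := by rintro rfl; exact hpeak hd
    dsimp only
    split_ifs <;> omega

/-- Otherwise deleting the letter `w (r + 1)` would leave a shorter word with as many descents. -/
theorem MinimalPerm.getD_lt_getD_add_two {d : ℕ} {w : List ℕ} (hmin : MinimalPerm d w)
    (hw : w.Nodup) {r : ℕ} (hr : r + 2 < w.length) (hasc : w.getD r 0 < w.getD (r + 1) 0) :
    w.getD r 0 < w.getD (r + 2) 0 := by
  refine lt_of_le_of_ne (not_lt.1 fun hjump => ?_) (hw.getD_ne (by omega) hr (by omega))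
  refine hmin.card_descents_ne_of_sublist hw (w.eraseIdx_sublist (r + 1)) ?_
    ((card_descents_eraseIdx_of_peak hr hasc hjump).trans hmin.1)
  simp [List.length_eraseIdx, show r + 1 < w.length by omega]
  omega

/-- `d ↦ ⌈d / 2⌉` is injective on pairwise non-adjacent positions, hence onto `[1, n]`. -/
theorem mem_or_mem_of_not_adjacent {D : Finset ℕ} {n : ℕ} (hD : D ⊆ Finset.Icc 1 (2 * n))
    (hcard : n ≤ D.card) (hsep : ∀ j ∈ D, j + 1 ∉ D) {k : ℕ} (hk : k ∈ Finset.Icc 1 n) :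
    2 * k - 1 ∈ D ∨ 2 * k ∈ D := by
  have hinj : Set.InjOn (fun d => (d + 1) / 2) D := by
    intro a ha b hb hab
    simp only at hab
    by_contra hne
    rcases (by omega : b = a + 1 ∨ a = b + 1) with rfl | rfl
    · exact hsep a ha hb
    · exact hsep b hb ha
  have himage : D.image (fun d => (d + 1) / 2) = Finset.Icc 1 n := by
    refine Finset.eq_of_subset_of_card_le (fun x hx => ?_) ?_
    · obtain ⟨d, hd, rfl⟩ := Finset.mem_image.1 hx
      have := Finset.mem_Icc.1 (hD hd)
      exact Finset.mem_Icc.2 ⟨by omega, by omega⟩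
    · rw [Finset.card_image_of_injOn hinj, Nat.card_Icc]
      omega
  obtain ⟨d, hd, hdk⟩ := Finset.mem_image.1 (himage ▸ hk)
  have := Finset.mem_Icc.1 (hD hd)
  rcases (by omega : d = 2 * k - 1 ∨ d = 2 * k) with rfl | rfl
  · exact .inl hd
  · exact .inr hd

theorem even_mem_of_unique_adjacent {D : Finset ℕ} {n i : ℕ} (hD : D ⊆ Finset.Icc 1 (2 * n))
    (hcard : D.card = n + 1) (h2i : 2 * i ∈ D) (huniq : ∀ j ∈ D, j + 1 ∈ D → j = 2 * i - 1)
    {k : ℕ} (hik : i ≤ k) (hkn : k ≤ n) : 2 * k ∈ D := by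
  have hi : 1 ≤ i := by have := Finset.mem_Icc.1 (hD h2i); omega
  have hsep : ∀ j ∈ D.erase (2 * i), j + 1 ∉ D.erase (2 * i) := by
    intro j hj hj1
    have := huniq j (Finset.mem_of_mem_erase hj) (Finset.mem_of_mem_erase hj1)
    exact (Finset.mem_erase.1 hj1).1 (by omega)
  induction k, hik using Nat.le_induction with
  | base => exact h2i
  | succ k hik ih =>
    have h2k := ih (by omega)
    rcases mem_or_mem_of_not_adjacent ((Finset.erase_subset _ _).trans hD)
      (by rw [Finset.card_erase_of_mem h2i, hcard]; omega) hsep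
      (Finset.mem_Icc.2 ⟨by omega, hkn⟩) with hodd | heven
    · have := huniq (2 * k) h2k (by convert Finset.mem_of_mem_erase hodd using 1; omega)
      omega
    · exact Finset.mem_of_mem_erase heven

theorem knuthEquiv_rearrangement_general (n i : ℕ) (w : List ℕ) (hw : w ∈ Mset n i) :
    KnuthEquiv w
      (w.take (2 * i) ++
        (List.range (n - i)).map (fun t => w.getD (2 * i + 2 * t + 1) 0) ++
        (List.range (n - i + 1)).map (fun t => w.getD (2 * i + 2 * t) 0)) := by
  obtain ⟨⟨hlen, hnd, -⟩, hmin, hd1, hd2, huniq⟩ := hw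
  have hi : 1 ≤ i ∧ i ≤ n := by have := hd1.1; have := hd2.2.1; omega
  have heven : ∀ t ≤ n - i, DescentAt w (2 * i + 2 * t) := fun t ht => by
    rw [show 2 * i + 2 * t = 2 * (i + t) by ring]
    exact mem_descents.1 <| even_mem_of_unique_adjacent
      (by simpa [hlen] using descents_subset_Icc w) hmin.1 (mem_descents.2 hd2)
      (fun j hj hj1 => huniq j (mem_descents.1 hj) (mem_descents.1 hj1)) (by omega) (by omega)
  set c : ℕ → ℕ := fun t => w.getD (2 * i + t) 0
  have hzigzag : ∀ t < n - i, c (2 * t) < c (2 * t + 2) ∧ c (2 * t + 2) < c (2 * t + 1) := by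
    intro t ht
    have hasc : c (2 * t) < c (2 * t + 1) := getD_lt_of_not_descentAt hnd (by omega) fun h => by
      have := huniq _ (heven t ht.le) h
      omega
    have hdesc := heven (t + 1) (by omega)
    rw [show 2 * i + 2 * (t + 1) = 2 * i + (2 * t + 1) + 1 by ring] at hdesc
    exact ⟨hmin.getD_lt_getD_add_two hnd (by omega) hasc, hdesc.getD_lt⟩
  have hdrop : w.drop (2 * i) = (List.range (2 * (n - i) + 1)).map c := by
    refine List.ext_getElem (by simp [hlen]; omega) fun j hj _ => ?_
    rw [List.getElem_drop, List.getElem_map, List.getElem_range]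
    exact (List.getD_eq_getElem _ _ _).symm
  have := (knuthEquiv_zigzag c (n - i) hzigzag).append_left (w.take (2 * i))
  rwa [← hdrop, List.take_append_drop, ← List.append_assoc] at this

/-- a minimal permutation `w` of length `2n+1` with `n+1` descents whose
unique pair of consecutive descents is `(2i-1, 2i)` is Knuth equivalent to the word
obtained by fixing its first `2i` entries and then listing the remaining entries with
even (1-based) subscripts, followed by those with odd subscripts. -/
theorem knuthEquiv_rearrangement (n i : ℕ) (hn : 1 ≤ n) (hi1 : 1 ≤ i) (hi2 : i ≤ n)
    (w : List ℕ) (hw : w ∈ Mset n i) :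
    KnuthEquiv w
      (w.take (2 * i) ++
        (List.range (n - i)).map (fun t => w.getD (2 * i + 2 * t + 1) 0) ++
        (List.range (n - i + 1)).map (fun t => w.getD (2 * i + 2 * t) 0)) :=
  knuthEquiv_rearrangement_general n i w hw
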